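/- For every ψ = (ψ₁, ψ₂) ∈ ℝ², the inner product of the gradient of V with X₀ vanishes: ∂₁V(ψ)·X₀,₁(ψ) + ∂₂V(ψ)·X₀,₂(ψ) = 0. That is, V is a conserved quantity (first integral) of the planar system ψ̇ = X₀(ψ). -/

import Mathlib

open Real

/-- The potential `V(ψ₁, ψ₂) = sin(ψ₁/2) sin(ψ₂/2) sin((ψ₂−ψ₁)/2)`. -/
noncomputable def V (ψ₁ ψ₂ : ℝ) : ℝ :=
  sin (ψ₁ / 2) * sin (ψ₂ / 2) * sin ((ψ₂ - ψ₁) / 2)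

/-- First component of the planar vector field `X₀`. -/
noncomputable def X0₁ (ψ₁ ψ₂ : ℝ) : ℝ := cos (ψ₁ - ψ₂) - cos ψ₂

/-- Second component of the planar vector field `X₀`. -/
noncomputable def X0₂ (ψ₁ ψ₂ : ℝ) : ℝ := cos (ψ₂ - ψ₁) - cos ψ₁

/-- `V` is a first integral of `ψ̇ = X₀(ψ)`: the gradient of `V` is orthogonal to `X₀`. -/
theorem V_conserved_by_X0 (ψ₁ ψ₂ : ℝ) :
    deriv (fun x => V x ψ₂) ψ₁ * X0₁ ψ₁ ψ₂
      + deriv (fun y => V ψ₁ y) ψ₂ * X0₂ ψ₁ ψ₂ = 0 := by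
  have h1 : HasDerivAt (fun x : ℝ => sin (x / 2)) (cos (ψ₁ / 2) * (1 / 2)) ψ₁ := by
    simpa using ((hasDerivAt_id ψ₁).div_const 2).sin
  have h2 : HasDerivAt (fun x : ℝ => sin ((ψ₂ - x) / 2)) (cos ((ψ₂ - ψ₁) / 2) * (-1 / 2)) ψ₁ := by
    simpa using (((hasDerivAt_id ψ₁).const_sub ψ₂).div_const 2).sin
  have hA : HasDerivAt (fun x => V x ψ₂)
      (cos (ψ₁ / 2) * (1 / 2) * sin (ψ₂ / 2) * sin ((ψ₂ - ψ₁) / 2)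
        + sin (ψ₁ / 2) * sin (ψ₂ / 2) * (cos ((ψ₂ - ψ₁) / 2) * (-1 / 2))) ψ₁ := by
    have := (h1.mul_const (sin (ψ₂ / 2))).mul h2
    simpa [V, mul_assoc, mul_comm, mul_left_comm, Pi.mul_def] using this
  have h3 : HasDerivAt (fun y : ℝ => sin (y / 2)) (cos (ψ₂ / 2) * (1 / 2)) ψ₂ := by
    simpa using ((hasDerivAt_id ψ₂).div_const 2).sin
  have h4 : HasDerivAt (fun y : ℝ => sin ((y - ψ₁) / 2)) (cos ((ψ₂ - ψ₁) / 2) * (1 / 2)) ψ₂ := by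
    simpa using (((hasDerivAt_id ψ₂).sub_const ψ₁).div_const 2).sin
  have hB : HasDerivAt (fun y => V ψ₁ y)
      (sin (ψ₁ / 2) * (cos (ψ₂ / 2) * (1 / 2)) * sin ((ψ₂ - ψ₁) / 2)
        + sin (ψ₁ / 2) * sin (ψ₂ / 2) * (cos ((ψ₂ - ψ₁) / 2) * (1 / 2))) ψ₂ := by
    have := ((h3.const_mul (sin (ψ₁ / 2))).mul h4)
    simpa [V, mul_assoc, mul_comm, mul_left_comm, Pi.mul_def] using this
  rw [hA.deriv, hB.deriv, X0₁, X0₂]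
  have hs1 : sin ψ₁ = 2 * sin (ψ₁ / 2) * cos (ψ₁ / 2) := by
    have := Real.sin_two_mul (ψ₁ / 2); rw [show 2 * (ψ₁ / 2) = ψ₁ by ring] at this
    linarith
  have hs2 : sin ψ₂ = 2 * sin (ψ₂ / 2) * cos (ψ₂ / 2) := by
    have := Real.sin_two_mul (ψ₂ / 2); rw [show 2 * (ψ₂ / 2) = ψ₂ by ring] at this
    linarith
  have p1 := Real.sin_sq_add_cos_sq (ψ₁ / 2)
  have p2 := Real.sin_sq_add_cos_sq (ψ₂ / 2)
  have hc1 : cos ψ₁ = 1 - 2 * sin (ψ₁ / 2) ^ 2 := by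
    have := Real.cos_two_mul (ψ₁ / 2)
    rw [show 2 * (ψ₁ / 2) = ψ₁ by ring] at this; nlinarith [p1]
  have hc2 : cos ψ₂ = 1 - 2 * sin (ψ₂ / 2) ^ 2 := by
    have := Real.cos_two_mul (ψ₂ / 2)
    rw [show 2 * (ψ₂ / 2) = ψ₂ by ring] at this; nlinarith [p2]
  rw [Real.cos_sub ψ₁ ψ₂, Real.cos_sub ψ₂ ψ₁,
    show (ψ₂ - ψ₁) / 2 = ψ₂ / 2 - ψ₁ / 2 by ring,
    Real.sin_sub, Real.cos_sub, hs1, hs2, hc1, hc2]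
  set s1 := sin (ψ₁ / 2); set c1 := cos (ψ₁ / 2)
  set s2 := sin (ψ₂ / 2); set c2 := cos (ψ₂ / 2)
  linear_combination (2 * s1 * c1 * s2 ^ 3 * c2 - s1 ^ 2 * s2 ^ 2 + 2 * s1 ^ 2 * s2 ^ 4) * p1
    + (s1 ^ 2 * s2 ^ 2 - 2 * s1 ^ 3 * c1 * s2 * c2 - 2 * s1 ^ 4 * s2 ^ 2) * p2
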